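/- arXiv:2407.21556 — 12 statements merged into one kernel-verified Lean document; each statement's English description precedes it below -/
import Mathlib

section
/- For any choice program P, the LPST operator is ⪯A_i-monotonic: if x1 ⊆ x2 and y2 ⊆ y1 (i.e. (x1,y1) ≤_i (x2,y2)) then HD^{LPST,l}_P(x1,y1) ⊆ HD^{LPST,l}_P(x2,y2), IC^{LPST,l}_P(x1,y1) ⪯S IC^{LPST,l}_P(x2,y2), and IC^{LPST,u}_P(x2,y2) ⪯H IC^{LPST,u}_P(x1,y1). -/
/-- A choice atom: a domain of atoms together with a family of satisfiers. -/
structure ChoiceAtom (A : Type*) where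
  dom : Set A
  sat : Set (Set A)

/-- A choice rule: a head choice atom and a finite list of body choice atoms. -/
structure ChoiceRule (A : Type*) where
  head : ChoiceAtom A
  body : List (ChoiceAtom A)

variable {A : Type*}

/-- `x` satisfies the choice atom `C` iff `x ∩ dom(C) ∈ sat(C)`. -/
def sats (x : Set A) (C : ChoiceAtom A) : Prop := x ∩ C.dom ∈ C.sat

/-- The rules of `P` whose bodies are all satisfied by `x`. -/
def applicable (P : Set (ChoiceRule A)) (x : Set A) : Set (ChoiceRule A) :=
  {r | r ∈ P ∧ ∀ Ci ∈ r.body, sats x Ci}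

/-- Heads of `x`-applicable rules. -/
def HD (P : Set (ChoiceRule A)) (x : Set A) : Set (ChoiceAtom A) :=
  {C | ∃ r ∈ applicable P x, r.head = C}

/-- Interpretations within the union of the domains of a set of heads that satisfy all heads. -/
def ICfrom (H : Set (ChoiceAtom A)) : Set (Set A) :=
  {z | z ⊆ (⋃ C ∈ H, C.dom) ∧ ∀ C ∈ H, sats z C}

/-- The immediate consequence operator for choice programs. -/
def ICP (P : Set (ChoiceRule A)) (x : Set A) : Set (Set A) := ICfrom (HD P x)

/-- Heads of rules whose bodies are satisfied by every `z` with `x ⊆ z ⊆ y`. -/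
def HDlpst (P : Set (ChoiceRule A)) (x y : Set A) : Set (ChoiceAtom A) :=
  {C | ∃ r ∈ P, r.head = C ∧ ∀ z : Set A, x ⊆ z → z ⊆ y → ∀ Ci ∈ r.body, sats z Ci}

/-- The lower bound of the LPST operator. -/
def IClpstL (P : Set (ChoiceRule A)) (x y : Set A) : Set (Set A) := ICfrom (HDlpst P x y)

/-- The upper bound of the LPST/MR operators, i.e. the ultimate lower/upper bound:
`⋃_{x ⊆ z ⊆ y} IC_P(z)`. -/
def ICuU (P : Set (ChoiceRule A)) (x y : Set A) : Set (Set A) :=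
  {w | ∃ z : Set A, x ⊆ z ∧ z ⊆ y ∧ w ∈ ICP P z}

/-- Heads of rules whose bodies are satisfied by `y` and by some `z ⊆ x`. -/
def HDmr (P : Set (ChoiceRule A)) (x y : Set A) : Set (ChoiceAtom A) :=
  {C | ∃ r ∈ P, r.head = C ∧ (∀ Ci ∈ r.body, sats y Ci) ∧
        ∃ z : Set A, z ⊆ x ∧ ∀ Ci ∈ r.body, sats z Ci}

/-- The lower bound of the MR operator. -/
def ICmrL (P : Set (ChoiceRule A)) (x y : Set A) : Set (Set A) := ICfrom (HDmr P x y)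

/-- Heads of rules s.t. `x ∩ dom(Ci) = y ∩ dom(Ci) ∈ sat(Ci)` for every body atom `Ci`. -/
def HDgz (P : Set (ChoiceRule A)) (x y : Set A) : Set (ChoiceAtom A) :=
  {C | ∃ r ∈ P, r.head = C ∧
        ∀ Ci ∈ r.body, x ∩ Ci.dom = y ∩ Ci.dom ∧ x ∩ Ci.dom ∈ Ci.sat}

/-- The lower (= upper) bound of the GZ operator. -/
def ICgzL (P : Set (ChoiceRule A)) (x y : Set A) : Set (Set A) := ICfrom (HDgz P x y)

/-- Smyth preorder on families of sets of atoms. -/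
def smyth (X Y : Set (Set A)) : Prop := ∀ y ∈ Y, ∃ x ∈ X, x ⊆ y

/-- Hoare preorder on families of sets of atoms. -/
def hoare (X Y : Set (Set A)) : Prop := ∀ x ∈ X, ∃ y ∈ Y, x ⊆ y

/-- The positive literal `a` as a choice atom `({a},{{a}})`. -/
def isPosLit (a : A) (C : ChoiceAtom A) : Prop := C.dom = {a} ∧ C.sat = {{a}}

/-- The negative literal `¬a` as a choice atom `({a},{∅})`. -/
def isNegLit (a : A) (C : ChoiceAtom A) : Prop := C.dom = {a} ∧ C.sat = {(∅ : Set A)}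

/-- A choice atom is a literal if it is a positive or negative literal. -/
def isLiteral (C : ChoiceAtom A) : Prop := ∃ a : A, isPosLit a C ∨ isNegLit a C

/-- A choice program is normal if all body atoms of all rules are literals. -/
def normalProgram (P : Set (ChoiceRule A)) : Prop :=
  ∀ r ∈ P, ∀ Ci ∈ r.body, isLiteral Ci

/-- `x` is a model of `P`. -/
def isModel (P : Set (ChoiceRule A)) (x : Set A) : Prop :=
  ∀ r ∈ P, (∀ Ci ∈ r.body, sats x Ci) → sats x r.head

theorem sats_inter_iff {C : ChoiceAtom A} {s : Set A} (hC : C.dom ⊆ s) (w : Set A) :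
    sats (w ∩ s) C ↔ sats w C := by
  rw [sats, sats, Set.inter_assoc, Set.inter_eq_self_of_subset_right hC]

theorem hoare_of_subset {X Y : Set (Set A)} (h : X ⊆ Y) : hoare X Y :=
  fun x hx => ⟨x, h hx, subset_rfl⟩

/-- The witness below a model of `H'` is that model cut down to the domains of `H`. -/
theorem smyth_ICfrom_of_subset {H H' : Set (ChoiceAtom A)} (h : H ⊆ H') :
    smyth (ICfrom H) (ICfrom H') := by
  rintro w ⟨-, hw⟩
  refine ⟨w ∩ ⋃ C ∈ H, C.dom, ⟨Set.inter_subset_right, fun C hC => ?_⟩, Set.inter_subset_left⟩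
  exact (sats_inter_iff (Set.subset_biUnion_of_mem hC) w).2 (hw C (h hC))

theorem HDlpst_mono (P : Set (ChoiceRule A)) {x1 y1 x2 y2 : Set A} (hx : x1 ⊆ x2)
    (hy : y2 ⊆ y1) : HDlpst P x1 y1 ⊆ HDlpst P x2 y2 := by
  rintro C ⟨r, hr, rfl, hbody⟩
  exact ⟨r, hr, rfl, fun z hz1 hz2 => hbody z (hx.trans hz1) (hz2.trans hy)⟩

theorem ICuU_anti (P : Set (ChoiceRule A)) {x1 y1 x2 y2 : Set A} (hx : x1 ⊆ x2)
    (hy : y2 ⊆ y1) : ICuU P x2 y2 ⊆ ICuU P x1 y1 := by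
  rintro w ⟨z, hz1, hz2, hw⟩
  exact ⟨z, hx.trans hz1, hz2.trans hy, hw⟩

/-- the LPST operator is `⪯A_i`-monotonic. -/
theorem lpst_Ai_monotonic (P : Set (ChoiceRule A)) (x1 y1 x2 y2 : Set A)
    (hx : x1 ⊆ x2) (hy : y2 ⊆ y1) :
    HDlpst P x1 y1 ⊆ HDlpst P x2 y2 ∧
    smyth (IClpstL P x1 y1) (IClpstL P x2 y2) ∧
    hoare (ICuU P x2 y2) (ICuU P x1 y1) :=
  ⟨HDlpst_mono P hx hy, smyth_ICfrom_of_subset (HDlpst_mono P hx hy),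
    hoare_of_subset (ICuU_anti P hx hy)⟩
end

section
/- For any choice program P, the ultimate operator is a non-deterministic approximation operator for IC_P: it is ⪯A_i-monotonic, i.e. if x1 ⊆ x2 and y2 ⊆ y1 then IC^{U,l}_P(x1,y1) ⪯S IC^{U,l}_P(x2,y2) and IC^{U,l}_P(x2,y2) ⪯H IC^{U,l}_P(x1,y1); and it is exact, i.e. IC^{U,l}_P(x,x) = IC_P(x) for every x ⊆ A. -/
variable {A : Type*}

theorem smyth_of_subset {X Y : Set (Set A)} (h : Y ⊆ X) : smyth X Y :=
  fun y hy => ⟨y, h hy, subset_rfl⟩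

theorem ICuU_subset_ICuU {P : Set (ChoiceRule A)} {x1 y1 x2 y2 : Set A} (hx : x1 ⊆ x2) (hy : y2 ⊆ y1) :
    ICuU P x2 y2 ⊆ ICuU P x1 y1 := by
  rintro w ⟨z, hxz, hzy, hw⟩
  exact ⟨z, hx.trans hxz, hzy.trans hy, hw⟩

theorem ICuU_self (P : Set (ChoiceRule A)) (x : Set A) : ICuU P x x = ICP P x := by
  ext w
  constructor
  · rintro ⟨z, hxz, hzx, hw⟩
    rwa [hzx.antisymm hxz] at hw
  · exact fun hw => ⟨x, subset_rfl, subset_rfl, hw⟩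

/-- the ultimate operator is an ndao for `IC_P`:
`⪯A_i`-monotonic and exact. -/
theorem ultimate_ndao (P : Set (ChoiceRule A)) :
    (∀ x1 y1 x2 y2 : Set A, x1 ⊆ x2 → y2 ⊆ y1 →
      smyth (ICuU P x1 y1) (ICuU P x2 y2) ∧ hoare (ICuU P x2 y2) (ICuU P x1 y1)) ∧
    (∀ x : Set A, ICuU P x x = ICP P x) :=
  ⟨fun _ _ _ _ hx hy => ⟨smyth_of_subset (ICuU_subset_ICuU hx hy), hoare_of_subset (ICuU_subset_ICuU hx hy)⟩,
    ICuU_self P⟩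
end

section
/- For any normal choice program P and any x ⊆ y ⊆ A, HD^{MR,l}_P(x,y) = HD^{LPST,l}_P(x,y) and hence IC^{MR,l}_P(x,y) = IC^{LPST,l}_P(x,y); since the upper bounds coincide by definition, the MR and LPST operators coincide on normal choice programs. -/
variable {A : Type*}

/-!
Satisfaction of a positive literal is monotone and that of a negative literal antitone in the
interpretation, so a literal satisfied by some `z ⊆ x` and by `y` is satisfied on the whole interval
`[x, y]`; conversely, a body satisfied on `[x, y]` is satisfied by its endpoints `x` and `y`.
-/

theorem sats_iff_mem_of_isPosLit {a : A} {C : ChoiceAtom A} (hC : isPosLit a C) (u : Set A) :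
    sats u C ↔ a ∈ u := by
  rw [sats, hC.1, hC.2, Set.mem_singleton_iff, Set.inter_eq_right, Set.singleton_subset_iff]

theorem sats_iff_notMem_of_isNegLit {a : A} {C : ChoiceAtom A} (hC : isNegLit a C) (u : Set A) :
    sats u C ↔ a ∉ u := by
  rw [sats, hC.1, hC.2, Set.mem_singleton_iff, Set.inter_singleton_eq_empty]

theorem isLiteral.sats_of_subset_of_subset {C : ChoiceAtom A} (hC : isLiteral C)
    {z w y : Set A} (hzw : z ⊆ w) (hwy : w ⊆ y) (hz : sats z C) (hy : sats y C) : sats w C := by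
  obtain ⟨a, hpos | hneg⟩ := hC
  · simp only [sats_iff_mem_of_isPosLit hpos] at hz ⊢
    exact hzw hz
  · simp only [sats_iff_notMem_of_isNegLit hneg] at hy ⊢
    exact fun ha => hy (hwy ha)

theorem HDmr_subset_HDlpst {P : Set (ChoiceRule A)} (hP : normalProgram P) (x y : Set A) :
    HDmr P x y ⊆ HDlpst P x y := by
  rintro C ⟨r, hr, rfl, hy, z, hzx, hz⟩
  exact ⟨r, hr, rfl, fun w hxw hwy Ci hCi =>
    (hP r hr Ci hCi).sats_of_subset_of_subset (hzx.trans hxw) hwy (hz Ci hCi) (hy Ci hCi)⟩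

theorem HDlpst_subset_HDmr (P : Set (ChoiceRule A)) {x y : Set A} (hxy : x ⊆ y) :
    HDlpst P x y ⊆ HDmr P x y := by
  rintro C ⟨r, hr, rfl, hall⟩
  exact ⟨r, hr, rfl, hall y hxy le_rfl, x, le_rfl, hall x le_rfl hxy⟩

/-- on normal choice programs the MR and LPST operators coincide. -/
theorem mr_eq_lpst_of_normal (P : Set (ChoiceRule A)) (hP : normalProgram P)
    (x y : Set A) (hxy : x ⊆ y) :
    HDmr P x y = HDlpst P x y ∧ ICmrL P x y = IClpstL P x y := by
  have hHD : HDmr P x y = HDlpst P x y :=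
    (HDmr_subset_HDlpst hP x y).antisymm (HDlpst_subset_HDmr P hxy)
  exact ⟨hHD, congrArg ICfrom hHD⟩
end

section
/- Let P be a choice program in which the head of every rule is a monotone choice atom. Then x ⊆ A is a model of P if and only if there exists z ∈ IC_P(x) with z ⊆ x (i.e. IC_P(x) ⪯S {x}). -/
variable {A : Type*}

/-- A choice atom is monotone. -/
def monotoneAtom (C : ChoiceAtom A) : Prop :=
  ∀ w w' : Set A, w ⊆ w' → w ∩ C.dom ∈ C.sat → w' ∩ C.dom ∈ C.sat

/-! A model satisfies every head of an applicable rule, so its trace on the union of those heads'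
domains lies in `IC_P(x)`. Conversely, monotonicity of the heads lifts their satisfaction from a
`z ⊆ x` in `IC_P(x)` to `x` itself. -/

theorem sats_inter_iff_of_dom_subset {x s : Set A} {C : ChoiceAtom A} (h : C.dom ⊆ s) :
    sats (x ∩ s) C ↔ sats x C := by
  rw [sats, sats, Set.inter_assoc, Set.inter_eq_right.mpr h]

theorem inter_biUnion_dom_mem_ICfrom {H : Set (ChoiceAtom A)} {x : Set A}
    (hx : ∀ C ∈ H, sats x C) : x ∩ ⋃ C ∈ H, C.dom ∈ ICfrom H :=
  ⟨Set.inter_subset_right, fun C hC =>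
    (sats_inter_iff_of_dom_subset (Set.subset_biUnion_of_mem (u := ChoiceAtom.dom) hC)).2
      (hx C hC)⟩

theorem exists_mem_ICfrom_subset_iff {H : Set (ChoiceAtom A)} (hH : ∀ C ∈ H, monotoneAtom C)
    (x : Set A) : (∃ z ∈ ICfrom H, z ⊆ x) ↔ ∀ C ∈ H, sats x C := by
  constructor
  · rintro ⟨z, ⟨-, hz⟩, hzx⟩ C hC
    exact hH C hC z x hzx (hz C hC)
  · exact fun hx => ⟨_, inter_biUnion_dom_mem_ICfrom hx, Set.inter_subset_left⟩

theorem isModel_iff_forall_mem_HD_sats (P : Set (ChoiceRule A)) (x : Set A) :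
    isModel P x ↔ ∀ C ∈ HD P x, sats x C := by
  constructor
  · rintro hx C ⟨r, ⟨hr, hbody⟩, rfl⟩
    exact hx r hr hbody
  · exact fun hx r hr hbody => hx r.head ⟨r, ⟨hr, hbody⟩, rfl⟩

theorem monotoneAtom_of_mem_HD {P : Set (ChoiceRule A)} (hmono : ∀ r ∈ P, monotoneAtom r.head)
    {x : Set A} {C : ChoiceAtom A} (hC : C ∈ HD P x) : monotoneAtom C := by
  obtain ⟨r, ⟨hr, -⟩, rfl⟩ := hC
  exact hmono r hr

/-- for programs with monotone heads, models are exactly the `x`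
with `IC_P(x) ⪯S {x}`, i.e. such that some `z ∈ IC_P(x)` satisfies `z ⊆ x`. -/
theorem model_iff_prefixpoint (P : Set (ChoiceRule A))
    (hmono : ∀ r ∈ P, monotoneAtom r.head) (x : Set A) :
    isModel P x ↔ ∃ z ∈ ICP P x, z ⊆ x := by
  rw [isModel_iff_forall_mem_HD_sats, ICP,
    exists_mem_ICfrom_subset_iff (fun _ hC => monotoneAtom_of_mem_HD hmono hC)]
end

section
/- Let L be a complete lattice and O : L → Set L an operator with nonempty values that is Hoare-monotonic and upwards closed. Then every maximal post-fixpoint of O is a fixpoint of O: if x is a post-fixpoint and no post-fixpoint is strictly greater than x, then x ∈ O(x). -/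
theorem maximal_postfixpoint_is_fixpoint_general {L : Type*} [CompleteLattice L]
    (O : L → Set L)
    (hmono : ∀ u v : L, u ≤ v → ∀ a ∈ O u, ∃ b ∈ O v, a ≤ b)
    (x : L) (hpost : ∃ z ∈ O x, x ≤ z)
    (hmax : ∀ w : L, (∃ z ∈ O w, w ≤ z) → ¬ x < w) :
    x ∈ O x := by
  obtain ⟨z, hz, hxz⟩ := hpost
  -- Hoare-monotonicity along `x ≤ z` makes the witness `z` a post-fixpoint as well.
  have hz_post : ∃ b ∈ O z, z ≤ b := hmono x z hxz z hz
  have hx_eq : x = z := hxz.eq_of_not_lt (hmax z hz_post)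
  exact hx_eq ▸ hz

/-- for a Hoare-monotonic, upwards closed non-deterministic
operator with nonempty values on a complete lattice, every maximal
post-fixpoint is a fixpoint. -/
theorem maximal_postfixpoint_is_fixpoint {L : Type*} [CompleteLattice L]
    (O : L → Set L)
    (hne : ∀ u : L, (O u).Nonempty)
    (hmono : ∀ u v : L, u ≤ v → ∀ a ∈ O u, ∃ b ∈ O v, a ≤ b)
    (hclosed : ∀ X : Set L, IsChain (· ≤ ·) X →
      (∀ u ∈ X, ∃ z ∈ O u, u ≤ z) → ∃ z ∈ O (sSup X), sSup X ≤ z)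
    (x : L) (hpost : ∃ z ∈ O x, x ≤ z)
    (hmax : ∀ w : L, (∃ z ∈ O w, w ≤ z) → ¬ x < w) :
    x ∈ O x :=
  maximal_postfixpoint_is_fixpoint_general O hmono x hpost hmax
end

section
/- Let L be a complete lattice and O : L → Set L an operator with nonempty values that is Hoare-monotonic and upwards closed. Then O admits a fixpoint: there exists x ∈ L with x ∈ O(x). -/
/-!
By Zorn's lemma, upwards closure yields a maximal post-fixpoint `m`, say `m ≤ z ∈ O m`.
Hoare monotonicity applied to `m ≤ z` makes `z` a post-fixpoint too, so maximality forces
`z = m`, i.e. `m ∈ O m`.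
-/

def postFixpoints {L : Type*} [LE L] (O : L → Set L) : Set L :=
  {x | ∃ z ∈ O x, x ≤ z}

theorem exists_maximal_mem_postFixpoints {L : Type*} [CompleteLattice L] (O : L → Set L)
    (hclosed : ∀ X : Set L, IsChain (· ≤ ·) X →
      (∀ u ∈ X, ∃ z ∈ O u, u ≤ z) → ∃ z ∈ O (sSup X), sSup X ≤ z) :
    ∃ m, Maximal (· ∈ postFixpoints O) m :=
  zorn_le₀ (postFixpoints O) fun _ hXpost hX =>
    ⟨_, hclosed _ hX hXpost, fun _ hx => le_sSup hx⟩

theorem mem_of_maximal_postFixpoints {L : Type*} [PartialOrder L] {O : L → Set L}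
    (hmono : ∀ u v : L, u ≤ v → ∀ a ∈ O u, ∃ b ∈ O v, a ≤ b) {m : L}
    (hm : Maximal (· ∈ postFixpoints O) m) : m ∈ O m := by
  obtain ⟨z, hzO, hmz⟩ := hm.prop
  have hz_post : z ∈ postFixpoints O := hmono m z hmz z hzO
  rwa [hm.eq_of_ge hz_post hmz] at hzO

theorem hoare_monotonic_has_fixpoint_general {L : Type*} [CompleteLattice L]
    (O : L → Set L)
    (hmono : ∀ u v : L, u ≤ v → ∀ a ∈ O u, ∃ b ∈ O v, a ≤ b)
    (hclosed : ∀ X : Set L, IsChain (· ≤ ·) X →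
      (∀ u ∈ X, ∃ z ∈ O u, u ≤ z) → ∃ z ∈ O (sSup X), sSup X ≤ z) :
    ∃ x : L, x ∈ O x :=
  let ⟨m, hm⟩ := exists_maximal_mem_postFixpoints O hclosed
  ⟨m, mem_of_maximal_postFixpoints hmono hm⟩

/-- every Hoare-monotonic, upwards closed non-deterministic
operator with nonempty values on a complete lattice admits a fixpoint. -/
theorem hoare_monotonic_has_fixpoint {L : Type*} [CompleteLattice L]
    (O : L → Set L)
    (hne : ∀ u : L, (O u).Nonempty)
    (hmono : ∀ u v : L, u ≤ v → ∀ a ∈ O u, ∃ b ∈ O v, a ≤ b)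
    (hclosed : ∀ X : Set L, IsChain (· ≤ ·) X →
      (∀ u ∈ X, ∃ z ∈ O u, u ≤ z) → ∃ z ∈ O (sSup X), sSup X ≤ z) :
    ∃ x : L, x ∈ O x :=
  hoare_monotonic_has_fixpoint_general O hmono hclosed
end

section
/- For any choice program P, every s-grounded set is a-grounded: if x ⊆ A is s-grounded for P, then x is a-grounded for P. -/
variable {A : Type*}

/-- `z` is an `x`-trigger for rule `r`: `z ⊆ x` and every `w` with
`z ⊆ w ⊆ x` satisfies every body atom of `r`. -/
def isTrigger (x : Set A) (r : ChoiceRule A) (z : Set A) : Prop :=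
  z ⊆ x ∧ ∀ w : Set A, z ⊆ w → w ⊆ x → ∀ Ci ∈ r.body, sats w Ci

/-- `x` is d(omain)-grounded for `P`. -/
def dGrounded (P : Set (ChoiceRule A)) (x : Set A) : Prop :=
  ∃ κ : A → ℕ, ∀ a ∈ x, ∃ r ∈ P, a ∈ r.head.dom ∧
    ∀ b ∈ x, (∃ Ci ∈ r.body, b ∈ Ci.dom) → κ b < κ a

/-- `x` is s(trongly)-grounded for `P`. -/
def sGrounded (P : Set (ChoiceRule A)) (x : Set A) : Prop :=
  ∃ κ : A → ℕ, ∀ a ∈ x, ∃ r ∈ P, a ∈ r.head.dom ∧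
    ∃ z : Set A, isTrigger x r z ∧ ∀ b ∈ z, κ b < κ a

/-- `x` is a(ntecedent)-grounded for `P`. -/
def aGrounded (P : Set (ChoiceRule A)) (x : Set A) : Prop :=
  ∃ κ : A → ℕ, ∀ a ∈ x, ∃ r ∈ P, a ∈ r.head.dom ∧
    ∀ Ci ∈ r.body, ∃ z : Set A, z ⊆ {b ∈ x | κ b < κ a} ∧ sats z Ci

theorem isTrigger.sats_body {x z : Set A} {r : ChoiceRule A} (h : isTrigger x r z) :
    ∀ Ci ∈ r.body, sats z Ci :=
  h.2 z subset_rfl h.1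

/-- every s-grounded set is a-grounded. -/
theorem sGrounded_aGrounded (P : Set (ChoiceRule A)) (x : Set A)
    (h : sGrounded P x) : aGrounded P x := by
  obtain ⟨κ, hκ⟩ := h
  refine ⟨κ, fun a ha => ?_⟩
  obtain ⟨r, hr, ha_dom, z, hz, hz_lt⟩ := hκ a ha
  exact ⟨r, hr, ha_dom, fun Ci hCi => ⟨z, fun b hb => ⟨hz.1 hb, hz_lt b hb⟩, hz.sats_body Ci hCi⟩⟩
end

section
/- Let P be a choice program, y ⊆ A, and ∅ = x_0 ⊆ x_1 ⊆ ⋯ ⊆ x_n a finite sequence with x_{i+1} ∈ IC^{GZ,l}_P(x_i, y) for every i < n and x_n ⊆ y. Then x_n is d-grounded for P. -/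
variable {A : Type*}

/-- `a` is produced by the step from `xs (firstStage xs a)` to the next set. -/
noncomputable def firstStage (xs : ℕ → Set A) (a : A) : ℕ := sInf {i | a ∈ xs (i + 1)}

section firstStage

variable {xs : ℕ → Set A} {a : A} {i : ℕ}

theorem mem_firstStage_succ (h0 : xs 0 = ∅) (ha : a ∈ xs i) :
    a ∈ xs (firstStage xs a + 1) := by
  cases i with
  | zero => simp [h0] at ha
  | succ k => exact Nat.sInf_mem (s := {i | a ∈ xs (i + 1)}) ⟨k, ha⟩

theorem firstStage_lt (h0 : xs 0 = ∅) (ha : a ∈ xs i) : firstStage xs a < i := by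
  cases i with
  | zero => simp [h0] at ha
  | succ k => exact Nat.lt_succ_of_le (Nat.sInf_le (s := {i | a ∈ xs (i + 1)}) ha)

end firstStage

theorem exists_rule_of_mem_ICgzL {P : Set (ChoiceRule A)} {x y z : Set A} {a : A}
    (hz : z ∈ ICgzL P x y) (ha : a ∈ z) :
    ∃ r ∈ P, a ∈ r.head.dom ∧ ∀ Ci ∈ r.body, y ∩ Ci.dom ⊆ x := by
  obtain ⟨C, ⟨r, hr, rfl, hbody⟩, haC⟩ := Set.mem_iUnion₂.mp (hz.1 ha)
  refine ⟨r, hr, haC, fun Ci hCi b hb => ?_⟩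
  rw [← (hbody Ci hCi).1] at hb
  exact hb.1

/-- Rank atoms by `firstStage`: an atom entering at step `i` lies in the head of a rule whose
body atoms meet `y`, hence `xs n`, only inside `xs i`, i.e. in atoms of smaller rank. -/
theorem gz_sequence_dGrounded_general (P : Set (ChoiceRule A)) (y : Set A) (n : ℕ)
    (xs : ℕ → Set A) (h0 : xs 0 = ∅)
    (hstep : ∀ i < n, xs (i + 1) ∈ ICgzL P (xs i) y)
    (hxy : xs n ⊆ y) :
    dGrounded P (xs n) := by
  refine ⟨firstStage xs, fun a ha => ?_⟩
  obtain ⟨r, hr, haC, hbody⟩ :=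
    exists_rule_of_mem_ICgzL (hstep _ (firstStage_lt h0 ha)) (mem_firstStage_succ h0 ha)
  refine ⟨r, hr, haC, fun b hb ⟨Ci, hCi, hbCi⟩ => ?_⟩
  exact firstStage_lt h0 (hbody Ci hCi ⟨hxy hb, hbCi⟩)

/-- limits of well-founded sequences of the GZ lower bound are
d-grounded. -/
theorem gz_sequence_dGrounded (P : Set (ChoiceRule A)) (y : Set A) (n : ℕ)
    (xs : ℕ → Set A) (h0 : xs 0 = ∅)
    (hmono : ∀ i < n, xs i ⊆ xs (i + 1))
    (hstep : ∀ i < n, xs (i + 1) ∈ ICgzL P (xs i) y)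
    (hxy : xs n ⊆ y) :
    dGrounded P (xs n) :=
  gz_sequence_dGrounded_general P y n xs h0 hstep hxy
end

section
/- Let P be a choice program, y ⊆ A, and ∅ = x_0 ⊆ x_1 ⊆ ⋯ ⊆ x_n a finite sequence with x_{i+1} ∈ IC^{LPST,l}_P(x_i, y) for every i < n and x_n ⊆ y. Then x_n is s-grounded for P. -/
/-!
Rank each atom by the first stage of the sequence at which it appears. An atom `a` first
appearing in `x_{m+1}` lies in the domain of a head of `HD^{LPST,l}_P(x_m, y)`, and since
`x_m ⊆ x_n ⊆ y`, the previous stage `x_m` is an `x_n`-trigger for that rule; every atom of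
`x_m` has rank at most `m`, below the rank `m + 1` of `a`.
-/

-- `sInf ∅ = 0`: the junk value when `a` never appears.
noncomputable def stage (xs : ℕ → Set A) (a : A) : ℕ := sInf {i | a ∈ xs i}

theorem mem_stage {xs : ℕ → Set A} {n : ℕ} {a : A} (ha : a ∈ xs n) : a ∈ xs (stage xs a) :=
  Nat.sInf_mem (s := {i | a ∈ xs i}) ⟨n, ha⟩

theorem stage_le {xs : ℕ → Set A} {n : ℕ} {a : A} (ha : a ∈ xs n) : stage xs a ≤ n :=
  Nat.sInf_le ha

theorem exists_stage_eq_succ {xs : ℕ → Set A} {n : ℕ} {a : A} (h0 : xs 0 = ∅)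
    (ha : a ∈ xs n) : ∃ m < n, stage xs a = m + 1 := by
  have hne : stage xs a ≠ 0 := fun h => by simpa [h, h0] using mem_stage ha
  exact ⟨stage xs a - 1, by have := stage_le ha; omega, by omega⟩

theorem subset_of_le_of_forall_lt_subset_succ {xs : ℕ → Set A} {n i j : ℕ}
    (hmono : ∀ k < n, xs k ⊆ xs (k + 1)) (hij : i ≤ j) (hjn : j ≤ n) : xs i ⊆ xs j := by
  induction hij with
  | refl => exact subset_rfl
  | step _ ih => exact (ih (by omega)).trans (hmono _ (by omega))

theorem exists_isTrigger_of_mem_IClpstL {P : Set (ChoiceRule A)} {x x' y w : Set A} {a : A}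
    (hx' : x' ∈ IClpstL P x y) (ha : a ∈ x') (hxw : x ⊆ w) (hwy : w ⊆ y) :
    ∃ r ∈ P, a ∈ r.head.dom ∧ isTrigger w r x := by
  obtain ⟨C, ⟨r, hrP, rfl, hbody⟩, haC⟩ := Set.mem_iUnion₂.mp (hx'.1 ha)
  exact ⟨r, hrP, haC, hxw, fun v hxv hvw => hbody v hxv (hvw.trans hwy)⟩

/-- limits of well-founded sequences of the LPST lower bound are
s-grounded. -/
theorem lpst_sequence_sGrounded (P : Set (ChoiceRule A)) (y : Set A) (n : ℕ)
    (xs : ℕ → Set A) (h0 : xs 0 = ∅)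
    (hmono : ∀ i < n, xs i ⊆ xs (i + 1))
    (hstep : ∀ i < n, xs (i + 1) ∈ IClpstL P (xs i) y)
    (hxy : xs n ⊆ y) :
    sGrounded P (xs n) := by
  refine ⟨stage xs, fun a ha => ?_⟩
  obtain ⟨m, hmn, hrank⟩ := exists_stage_eq_succ h0 ha
  have ham : a ∈ xs (m + 1) := hrank ▸ mem_stage ha
  obtain ⟨r, hrP, har, htrig⟩ := exists_isTrigger_of_mem_IClpstL (hstep m hmn) ham
    (subset_of_le_of_forall_lt_subset_succ hmono hmn.le le_rfl) hxy
  exact ⟨r, hrP, har, xs m, htrig, fun b hb => hrank ▸ Nat.lt_succ_of_le (stage_le hb)⟩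
end

section
/- Let P be a choice program, y ⊆ A, and ∅ = x_0 ⊆ x_1 ⊆ ⋯ ⊆ x_n a finite sequence with x_{i+1} ∈ IC^{MR,l}_P(x_i, y) for every i < n. Then x_n is a-grounded for P. -/
variable {A : Type*}

/-! Rank every atom of `xs n` by the first stage at which it appears. An atom entering at
stage `k + 1` lies in the domain of a head in `HD^{MR,l}_P(xs k, y)`, and the body atoms of that
rule are satisfied by subsets of `xs k`, all of whose atoms have rank at most `k`. -/

theorem monotoneOn_nat_Iic_of_le_succ {α : Type*} [Preorder α] {f : ℕ → α} {n : ℕ}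
    (hf : ∀ i < n, f i ≤ f (i + 1)) : MonotoneOn f (Set.Iic n) := by
  intro a _ b hb hab
  induction b, hab using Nat.le_induction with
  | base => exact le_rfl
  | succ j _ ih =>
    have hjn : j < n := hb
    exact (ih hjn.le).trans (hf j hjn)

def Supported (P : Set (ChoiceRule A)) (x : Set A) (a : A) : Prop :=
  ∃ r ∈ P, a ∈ r.head.dom ∧ ∀ Ci ∈ r.body, ∃ z ⊆ x, sats z Ci

theorem Supported.mono {P : Set (ChoiceRule A)} {x x' : Set A} {a : A} (h : Supported P x a)
    (hx : x ⊆ x') : Supported P x' a := by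
  obtain ⟨r, hrP, har, hbody⟩ := h
  refine ⟨r, hrP, har, fun Ci hCi => ?_⟩
  obtain ⟨z, hzx, hz⟩ := hbody Ci hCi
  exact ⟨z, hzx.trans hx, hz⟩

theorem supported_of_mem_ICmrL {P : Set (ChoiceRule A)} {x y w : Set A} {a : A}
    (hw : w ∈ ICmrL P x y) (ha : a ∈ w) : Supported P x a := by
  obtain ⟨C, ⟨r, hrP, rfl, -, z, hzx, hz⟩, haC⟩ := Set.mem_iUnion₂.mp (hw.1 ha)
  exact ⟨r, hrP, haC, fun Ci hCi => ⟨z, hzx, hz Ci hCi⟩⟩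

theorem aGrounded_of_supported_succ {P : Set (ChoiceRule A)} {n : ℕ} {xs : ℕ → Set A}
    (h0 : xs 0 = ∅) (hmono : ∀ i < n, xs i ⊆ xs (i + 1))
    (hsupp : ∀ i < n, ∀ a ∈ xs (i + 1), Supported P (xs i) a) : aGrounded P (xs n) := by
  let κ : A → ℕ := fun a => sInf {i | a ∈ xs i}
  refine ⟨κ, fun a ha => ?_⟩
  have ha_first : κ a ∈ {i | a ∈ xs i} := Nat.sInf_mem ⟨n, ha⟩
  have hκa : κ a ≤ n := Nat.sInf_le ha
  obtain ⟨k, hk⟩ : ∃ k, κ a = k + 1 :=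
    Nat.exists_eq_add_one.mpr (Nat.pos_of_ne_zero fun h => by simp [h, h0] at ha_first)
  rw [hk] at ha_first hκa
  have hkn : k < n := hκa
  have hearlier : xs k ⊆ {b ∈ xs n | κ b < κ a} := fun b hb =>
    ⟨monotoneOn_nat_Iic_of_le_succ hmono (Set.mem_Iic.mpr hkn.le) Set.self_mem_Iic hkn.le hb,
      hk ▸ Nat.lt_succ_of_le (Nat.sInf_le hb)⟩
  exact (hsupp k hkn a ha_first).mono hearlier

/-- limits of well-founded sequences of the MR lower bound are
a-grounded. -/
theorem mr_sequence_aGrounded (P : Set (ChoiceRule A)) (y : Set A) (n : ℕ)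
    (xs : ℕ → Set A) (h0 : xs 0 = ∅)
    (hmono : ∀ i < n, xs i ⊆ xs (i + 1))
    (hstep : ∀ i < n, xs (i + 1) ∈ ICmrL P (xs i) y) :
    aGrounded P (xs n) :=
  aGrounded_of_supported_succ h0 hmono fun i hi _ ha => supported_of_mem_ICmrL (hstep i hi) ha
end

section
/- Let P be a normal choice program in which every rule head is an atom, i.e. every rule has the form a ← a1,…,an,¬b1,…,¬bm (a normal logic program). If x ⊆ A is a-grounded for P, then x is grounded in the sense of Erdem and Lifschitz: there is κ : x → ℕ such that for every a ∈ x there is a rule a ← a1,…,an,¬b1,…,¬bm in P with ai ∈ x and κ(a) > κ(ai) for every i = 1,…,n. -/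
variable {A : Type*}

theorem isPosLit.sats_iff {a : A} {C : ChoiceAtom A} {z : Set A} (hC : isPosLit a C) :
    sats z C ↔ a ∈ z := by
  rw [sats, hC.1, hC.2, Set.mem_singleton_iff, Set.inter_eq_right, Set.singleton_subset_iff]

theorem aGrounded_erdem_lifschitz_general (P : Set (ChoiceRule A))
    (x : Set A) (h : aGrounded P x) :
    ∃ κ : A → ℕ, ∀ a ∈ x, ∃ r ∈ P, a ∈ r.head.dom ∧
      ∀ Ci ∈ r.body, ∀ b : A, isPosLit b Ci → b ∈ x ∧ κ b < κ a := by
  obtain ⟨κ, hκ⟩ := h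
  refine ⟨κ, fun a ha => ?_⟩
  obtain ⟨r, hrP, hdom, hbody⟩ := hκ a ha
  refine ⟨r, hrP, hdom, fun Ci hCi b hb => ?_⟩
  obtain ⟨z, hz, hsat⟩ := hbody Ci hCi
  exact hz (hb.sats_iff.mp hsat)

/-- for normal logic programs (normal choice programs with atomic
heads), a-grounded sets are grounded in the sense of Erdem and Lifschitz. -/
theorem aGrounded_erdem_lifschitz (P : Set (ChoiceRule A))
    (hP : normalProgram P)
    (hheads : ∀ r ∈ P, ∃ a : A, isPosLit a r.head)
    (x : Set A) (h : aGrounded P x) :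
    ∃ κ : A → ℕ, ∀ a ∈ x, ∃ r ∈ P, a ∈ r.head.dom ∧
      ∀ Ci ∈ r.body, ∀ b : A, isPosLit b Ci → b ∈ x ∧ κ b < κ a :=
  aGrounded_erdem_lifschitz_general P x h
end

section
/- For any disjunctive normal logic program P and any x ⊆ y ⊆ A: IC^{d,l}_P(x,y) = IC^{MR,l}_{D2C(P)}(x,y) = IC^{LPST,l}_{D2C(P)}(x,y); i.e., the lower bound of the operator for disjunctive logic programs coincides with the lower bounds of the MR and LPST operators applied to the translation of P into a choice program. -/
variable {A : Type*}

/-- A disjunctive normal rule: a nonempty set of head atoms, finite sets of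
positive and negative body atoms. -/
structure DisjRule (A : Type*) where
  head : Set A
  hne : head.Nonempty
  pos : Finset A
  neg : Finset A

/-- Heads of rules of `P` whose positive body is contained in `x` and whose
negative body is disjoint from `y`. -/
def HDdl (P : Set (DisjRule A)) (x y : Set A) : Set (Set A) :=
  {Δ | ∃ r ∈ P, r.head = Δ ∧ (↑r.pos : Set A) ⊆ x ∧ ∀ b ∈ r.neg, b ∉ y}

/-- The lower bound of the ndao for disjunctive logic programs. -/
def ICdl (P : Set (DisjRule A)) (x y : Set A) : Set (Set A) :=
  {z | z ⊆ (⋃ Δ ∈ HDdl P x y, Δ) ∧ ∀ Δ ∈ HDdl P x y, (z ∩ Δ).Nonempty}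

/-- Translation of a disjunctive logic program into a choice program: each head
`Δ` becomes the choice atom `(Δ, {w ⊆ Δ | w ≠ ∅})`, each positive body atom `a`
becomes `({a},{{a}})` and each negative body atom `b` becomes `({b},{∅})`. -/
def D2C (P : Set (DisjRule A)) : Set (ChoiceRule A) :=
  (fun r : DisjRule A =>
    ChoiceRule.mk ⟨r.head, {w : Set A | w ⊆ r.head ∧ w.Nonempty}⟩
      (r.pos.toList.map (fun a => (⟨{a}, {{a}}⟩ : ChoiceAtom A)) ++
       r.neg.toList.map (fun b => (⟨{b}, {(∅ : Set A)}⟩ : ChoiceAtom A)))) '' P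

/-! The body of a translated rule consists of literal atoms, so it holds at `z` exactly when
`z` contains the positive atoms and avoids the negative ones. Since this is monotone in the
positive and antitone in the negative part, both the MR and the LPST applicability conditions on
`[x, y]` reduce to "positive atoms in `x`, negative atoms outside `y`", which is the condition of
`HDdl`; and a translated head `(Δ, {w ⊆ Δ | w ≠ ∅})` is satisfied by `z` iff `z` meets `Δ`. -/

def posLitAtom (a : A) : ChoiceAtom A := ⟨{a}, {{a}}⟩

def negLitAtom (b : A) : ChoiceAtom A := ⟨{b}, {∅}⟩

def disjunctionAtom (Δ : Set A) : ChoiceAtom A := ⟨Δ, {w | w ⊆ Δ ∧ w.Nonempty}⟩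

@[simp]
theorem disjunctionAtom_dom (Δ : Set A) : (disjunctionAtom Δ).dom = Δ := rfl

noncomputable def DisjRule.toChoiceRule (r : DisjRule A) : ChoiceRule A :=
  ⟨disjunctionAtom r.head, r.pos.toList.map posLitAtom ++ r.neg.toList.map negLitAtom⟩

@[simp]
theorem DisjRule.toChoiceRule_head (r : DisjRule A) :
    r.toChoiceRule.head = disjunctionAtom r.head :=
  rfl

theorem D2C_eq_image (P : Set (DisjRule A)) : D2C P = DisjRule.toChoiceRule '' P := rfl

@[simp]
theorem sats_posLitAtom {z : Set A} {a : A} : sats z (posLitAtom a) ↔ a ∈ z := by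
  simp [sats, posLitAtom, Set.singleton_subset_iff]

@[simp]
theorem sats_negLitAtom {z : Set A} {b : A} : sats z (negLitAtom b) ↔ b ∉ z := by
  simp [sats, negLitAtom, Set.inter_singleton_eq_empty]

@[simp]
theorem sats_disjunctionAtom {z Δ : Set A} : sats z (disjunctionAtom Δ) ↔ (z ∩ Δ).Nonempty := by
  simp [sats, disjunctionAtom]

theorem DisjRule.sats_body_iff (r : DisjRule A) (z : Set A) :
    (∀ C ∈ r.toChoiceRule.body, sats z C) ↔ (↑r.pos : Set A) ⊆ z ∧ ∀ b ∈ r.neg, b ∉ z := by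
  simp [DisjRule.toChoiceRule, or_imp, forall_and, Set.subset_def]

theorem HDmr_D2C (P : Set (DisjRule A)) {x y : Set A} (hxy : x ⊆ y) :
    HDmr (D2C P) x y = disjunctionAtom '' HDdl P x y := by
  ext C
  simp only [HDmr, D2C_eq_image, Set.mem_ofPred_eq, Set.exists_mem_image,
    DisjRule.toChoiceRule_head, DisjRule.sats_body_iff]
  simp only [HDdl, Set.mem_image, Set.mem_ofPred_eq]
  constructor
  · rintro ⟨r, hr, rfl, ⟨-, hneg⟩, z, hzx, hpos, -⟩
    exact ⟨r.head, ⟨r, hr, rfl, hpos.trans hzx, hneg⟩, rfl⟩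
  · rintro ⟨-, ⟨r, hr, rfl, hpos, hneg⟩, rfl⟩
    exact ⟨r, hr, rfl, ⟨hpos.trans hxy, hneg⟩, x, subset_rfl, hpos,
      fun b hb hbx => hneg b hb (hxy hbx)⟩

theorem HDlpst_D2C (P : Set (DisjRule A)) {x y : Set A} (hxy : x ⊆ y) :
    HDlpst (D2C P) x y = disjunctionAtom '' HDdl P x y := by
  ext C
  simp only [HDlpst, D2C_eq_image, Set.mem_ofPred_eq, Set.exists_mem_image,
    DisjRule.toChoiceRule_head, DisjRule.sats_body_iff]
  simp only [HDdl, Set.mem_image, Set.mem_ofPred_eq]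
  constructor
  · rintro ⟨r, hr, rfl, hbody⟩
    exact ⟨r.head, ⟨r, hr, rfl, (hbody x subset_rfl hxy).1, (hbody y hxy subset_rfl).2⟩, rfl⟩
  · rintro ⟨-, ⟨r, hr, rfl, hpos, hneg⟩, rfl⟩
    exact ⟨r, hr, rfl, fun z hxz hzy => ⟨hpos.trans hxz, fun b hb hbz => hneg b hb (hzy hbz)⟩⟩

theorem ICfrom_image_disjunctionAtom (H : Set (Set A)) :
    ICfrom (disjunctionAtom '' H) = {z | z ⊆ ⋃ Δ ∈ H, Δ ∧ ∀ Δ ∈ H, (z ∩ Δ).Nonempty} := by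
  simp only [ICfrom, Set.biUnion_image, Set.forall_mem_image, disjunctionAtom_dom,
    sats_disjunctionAtom]

/-- the lower bound of the disjunctive operator coincides with
the MR and LPST lower bounds on the translated choice program. -/
theorem disj_eq_mr_eq_lpst (P : Set (DisjRule A)) (x y : Set A) (hxy : x ⊆ y) :
    ICdl P x y = ICmrL (D2C P) x y ∧ ICmrL (D2C P) x y = IClpstL (D2C P) x y := by
  rw [ICmrL, IClpstL, HDmr_D2C P hxy, HDlpst_D2C P hxy, ICfrom_image_disjunctionAtom]
  exact ⟨rfl, rfl⟩
end
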